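/- For q = 2, the graph NU(3,4) is strongly regular with parameters (12, 9, 6, 9). -/

import Mathlib

open Projectivization
open scoped LinearAlgebra.Projectivization

variable (F : Type) [Field F] [Fintype F]

/-- The projective space PG(n, |F|) over `F`, as the projectivization of `Fin (n+1) → F`. -/
abbrev PG (n : ℕ) := ℙ F (Fin (n+1) → F)

/-- The Hermitian variety `H(n,q^2)`: points `[x_0 : ... : x_n]` with
`x_0^{q+1} + ... + x_n^{q+1} = 0`. -/
def Herm (q n : ℕ) : Set (PG F n) :=
  {p | ∑ i, (p.rep i) ^ (q+1) = 0}

/-- The set of points of `PG(n,q^2)` lying on the line given by a `2`-dimensional subspace. -/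
def lineSet (n : ℕ) (W : Submodule F (Fin (n+1) → F)) : Set (PG F n) :=
  {p | p.submodule ≤ W}

/-- `W` determines a line of `PG(n,q^2)`, i.e. it is a `2`-dimensional subspace. -/
def IsLine (n : ℕ) (W : Submodule F (Fin (n+1) → F)) : Prop :=
  Module.finrank F W = 2

/-- A line is tangent to `H(n,q^2)` if it meets it in exactly one point. -/
def IsTangent (q n : ℕ) (W : Submodule F (Fin (n+1) → F)) : Prop :=
  IsLine F n W ∧ (lineSet F n W ∩ Herm F q n).ncard = 1

/-- The graph `NU(n+1,q^2)`: vertices are points off the Hermitian variety, two distinct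
vertices adjacent iff the line joining them is tangent to `H(n,q^2)`. -/
def NU (q n : ℕ) : SimpleGraph {p : PG F n // p ∉ Herm F q n} where
  Adj u v := u ≠ v ∧ IsTangent F q n (Submodule.span F {u.1.rep, v.1.rep})
  symm := by
    constructor
    rintro u v ⟨h1, h2⟩
    exact ⟨h1.symm, by rwa [Set.pair_comm]⟩
  loopless := ⟨fun u h => h.1 rfl⟩

/-- A strongly regular graph with parameters `(v, k, l, m)`. -/
def IsSRG {V : Type} (G : SimpleGraph V) (v k l m : ℤ) : Prop :=
  (Nat.card V : ℤ) = v ∧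
  (∀ x, (Nat.card (G.neighborSet x) : ℤ) = k) ∧
  (∀ x y, G.Adj x y → (Nat.card (G.commonNeighbors x y) : ℤ) = l) ∧
  (∀ x y, x ≠ y → ¬ G.Adj x y → (Nat.card (G.commonNeighbors x y) : ℤ) = m)

/-!
Two distinct points are adjacent in `NU` exactly when the line through them carries one Hermitian
point. Parametrising that line by `K ∪ {∞}` turns the number of Hermitian points on it into a
count of zeros of a polynomial in the coordinates, which field isomorphisms preserve. Choosing
normalised coordinates (first nonzero coordinate `1`) therefore identifies `NU(3,4)` over any field
of order `4` with one explicit graph over a concrete model of `𝔽₄`, whose parameters are computed.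
-/

open Finset Function Submodule

section ProjectiveLine

variable {K V : Type*} [Field K] [AddCommGroup V] [Module K V] {a b : V}

def lineVec (a b : V) : Option K → V
  | none => b
  | some t => a + t • b

theorem LinearIndependent.lineVec_ne_zero (h : LinearIndependent K ![a, b]) (o : Option K) :
    lineVec a b o ≠ 0 := by
  rw [LinearIndependent.pair_iff] at h
  cases o with
  | none => exact fun h0 => one_ne_zero (h 0 1 (by simpa [lineVec] using h0)).2
  | some t => exact fun h0 => one_ne_zero (h 1 t (by simpa [lineVec] using h0)).1

def linePoint (h : LinearIndependent K ![a, b]) (o : Option K) : ℙ K V :=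
  mk K (lineVec a b o) (h.lineVec_ne_zero o)

theorem linePoint_injective (h : LinearIndependent K ![a, b]) : Injective (linePoint h) := by
  rw [LinearIndependent.pair_iff] at h
  rintro (_ | s) (_ | t) hst <;> obtain ⟨c, hc⟩ := (mk_eq_mk_iff' K _ _ _ _).1 hst
  · rfl
  · have := h c (c * t - 1) (by rw [← sub_eq_zero.2 hc]; simp only [lineVec]; module)
    simp [this.1] at this
  · have := h 1 (s - c) (by rw [← sub_eq_zero.2 hc.symm]; simp only [lineVec]; module)
    exact absurd this.1 one_ne_zero
  · have := h (c - 1) (c * t - s) (by rw [← sub_eq_zero.2 hc]; simp only [lineVec]; module)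
    obtain rfl : c = 1 := by linear_combination this.1
    simpa [sub_eq_zero, eq_comm] using this.2

theorem range_linePoint (h : LinearIndependent K ![a, b]) :
    Set.range (linePoint h) = {p | p.submodule ≤ span K {a, b}} := by
  ext p
  induction p using Projectivization.ind with
  | h v hv =>
  simp only [Set.mem_range, Set.mem_ofPred_eq, submodule_mk, span_singleton_le_iff_mem]
  constructor
  · rintro ⟨_ | t, ht⟩ <;> obtain ⟨c, rfl⟩ := (mk_eq_mk_iff' K _ _ _ _).1 ht.symm
    · exact smul_mem _ _ (subset_span (by simp [lineVec]))
    · exact smul_mem _ _ (mem_span_pair.2 ⟨1, t, by simp [lineVec]⟩)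
  · intro hmem
    obtain ⟨s, t, rfl⟩ := mem_span_pair.1 hmem
    by_cases hs : s = 0
    · subst hs
      exact ⟨none, (mk_eq_mk_iff' K _ _ _ _).2 ⟨t⁻¹, by
        have ht : t ≠ 0 := by rintro rfl; simp at hv
        simp [lineVec, smul_smul, inv_mul_cancel₀ ht]⟩⟩
    · exact ⟨some (s⁻¹ * t), (mk_eq_mk_iff' K _ _ _ _).2 ⟨s⁻¹, by
        simp [lineVec, smul_add, smul_smul, inv_mul_cancel₀ hs]⟩⟩

theorem finrank_span_pair (h : LinearIndependent K ![a, b]) :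
    Module.finrank K (span K {a, b}) = 2 := by
  rw [← Matrix.range_cons_cons_empty a b ![], finrank_span_eq_card h, Fintype.card_fin]

theorem span_rep_pair (ha : a ≠ 0) (hb : b ≠ 0) :
    span K {(mk K a ha).rep, (mk K b hb).rep} = span K {a, b} := by
  rw [span_insert, span_insert, ← submodule_eq, ← submodule_eq, submodule_mk, submodule_mk]

theorem linearIndependent_pair_of_mk_ne {ha : a ≠ 0} {hb : b ≠ 0} (h : mk K a ha ≠ mk K b hb) :
    LinearIndependent K ![a, b] :=
  (LinearIndependent.pair_iff' ha).2 fun c hc => h ((mk_eq_mk_iff' K b a hb ha).2 ⟨c, hc⟩).symm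

end ProjectiveLine

section HermitianCount

variable {K : Type} [Field K] {q n : ℕ}

theorem mk_mem_herm_iff {v : Fin (n + 1) → K} (hv : v ≠ 0) :
    mk K v hv ∈ Herm K q n ↔ ∑ i, v i ^ (q + 1) = 0 := by
  obtain ⟨c, hc⟩ := exists_smul_eq_mk_rep K v hv
  simp only [Herm, Set.mem_ofPred_eq, ← hc, Pi.smul_apply, Units.smul_def, smul_eq_mul, mul_pow,
    ← Finset.mul_sum]
  exact mul_eq_zero_iff_left (pow_ne_zero _ c.ne_zero)

variable [Fintype K] [DecidableEq K]

def hermCount (q : ℕ) {m : ℕ} (a b : Fin m → K) : ℕ :=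
  #{o : Option K | ∑ i, lineVec a b o i ^ (q + 1) = 0}

theorem ncard_lineSet_inter_herm {a b : Fin (n + 1) → K} (h : LinearIndependent K ![a, b]) :
    (lineSet K n (span K {a, b}) ∩ Herm K q n).ncard = hermCount q a b := by
  have hpre : linePoint h ⁻¹' Herm K q n =
      ↑({o | ∑ i, lineVec a b o i ^ (q + 1) = 0} : Finset (Option K)) := by
    ext o
    simp [linePoint, mk_mem_herm_iff]
  rw [lineSet, ← range_linePoint h, ← Set.image_preimage_eq_range_inter, hpre,
    Set.ncard_image_of_injective _ (linePoint_injective h), Set.ncard_coe_finset, hermCount]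

theorem hermCount_eq_of_span_eq {a b c d : Fin (n + 1) → K} (hab : LinearIndependent K ![a, b])
    (hcd : LinearIndependent K ![c, d]) (h : span K {a, b} = span K {c, d}) :
    hermCount q a b = hermCount q c d := by
  rw [← ncard_lineSet_inter_herm hab, ← ncard_lineSet_inter_herm hcd, h]

theorem hermCount_comm {a b : Fin (n + 1) → K} (h : LinearIndependent K ![a, b]) :
    hermCount q a b = hermCount q b a :=
  hermCount_eq_of_span_eq h (LinearIndependent.pair_symm_iff.1 h) (by rw [Set.pair_comm])

theorem hermCount_rep_mk {a b : Fin (n + 1) → K} {ha : a ≠ 0} {hb : b ≠ 0}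
    (h : mk K a ha ≠ mk K b hb) :
    hermCount q (mk K a ha).rep (mk K b hb).rep = hermCount q a b :=
  hermCount_eq_of_span_eq (linearIndependent_pair_iff_ne.2 h) (linearIndependent_pair_of_mk_ne h)
    (span_rep_pair ha hb)

theorem NU_adj_iff {u v : {p : PG K n // p ∉ Herm K q n}} :
    (NU K q n).Adj u v ↔ u ≠ v ∧ hermCount q u.1.rep v.1.rep = 1 := by
  refine and_congr_right fun huv => ?_
  have h := linearIndependent_pair_iff_ne.2 (Subtype.coe_ne_coe.2 huv)
  rw [IsTangent, IsLine, finrank_span_pair h, ncard_lineSet_inter_herm h]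
  exact and_iff_right rfl

end HermitianCount

section Normalized

variable {K L : Type*} [Field K] [Field L] {m : ℕ}

def IsNormalized (v : Fin m → K) : Prop :=
  ∃ i, v i = 1 ∧ ∀ j < i, v j = 0

instance [DecidableEq K] : DecidablePred (IsNormalized (K := K) (m := m)) :=
  fun _ => inferInstanceAs (Decidable (∃ i, _ ∧ ∀ j < i, _))

theorem IsNormalized.ne_zero {v : Fin m → K} (hv : IsNormalized v) : v ≠ 0 := by
  obtain ⟨i, hi, -⟩ := hv
  rintro rfl
  exact zero_ne_one hi

theorem IsNormalized.eq_of_mk_eq {v w : Fin m → K} (hv : IsNormalized v) (hw : IsNormalized w)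
    (h : mk K v hv.ne_zero = mk K w hw.ne_zero) : v = w := by
  obtain ⟨c, rfl⟩ := (mk_eq_mk_iff' K _ _ _ _).1 h.symm
  obtain ⟨i, hi1, hi0⟩ := hv
  obtain ⟨j, hj1, hj0⟩ := hw
  simp only [Pi.smul_apply, smul_eq_mul] at hj1 hj0
  rcases lt_trichotomy i j with hij | rfl | hji
  · have hc := hj0 i hij
    rw [hi1, mul_one] at hc
    simp [hc] at hj1
  · rw [hi1, mul_one] at hj1
    rw [hj1, one_smul]
  · simp [hi0 j hji] at hj1

theorem exists_isNormalized_mk_eq {v : Fin m → K} (hv : v ≠ 0) :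
    ∃ w, ∃ hw : IsNormalized w, mk K w hw.ne_zero = mk K v hv := by
  classical
  have hne : ({i | v i ≠ 0} : Finset (Fin m)).Nonempty := by
    obtain ⟨i, hi⟩ := Function.ne_iff.1 hv
    exact ⟨i, by simpa using hi⟩
  have hi : v (Finset.min' _ hne) ≠ 0 := by simpa using Finset.min'_mem _ hne
  refine ⟨(v (Finset.min' _ hne))⁻¹ • v, ⟨Finset.min' _ hne, by simp [hi], fun j hj => ?_⟩,
    (mk_eq_mk_iff' K _ _ _ _).2 ⟨(v (Finset.min' _ hne))⁻¹, rfl⟩⟩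
  by_contra hvj
  exact (Finset.min'_le _ j (by simpa [hi] using hvj)).not_gt hj

theorem isNormalized_map_iff (σ : K ≃+* L) {v : Fin m → K} :
    IsNormalized (fun i => σ (v i)) ↔ IsNormalized v := by
  simp [IsNormalized]

end Normalized

theorem hermCount_map {K L : Type} [Field K] [Fintype K] [DecidableEq K] [Field L] [Fintype L]
    [DecidableEq L] (σ : K ≃+* L) (q : ℕ) {m : ℕ} (a b : Fin m → K) :
    hermCount q (fun i => σ (a i)) (fun i => σ (b i)) = hermCount q a b := by
  rw [hermCount, hermCount]
  refine (Finset.card_equiv (Equiv.optionCongr σ.toEquiv) fun o => ?_).symm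
  simp only [Finset.mem_filter, Finset.mem_univ, true_and]
  cases o <;> simp [lineVec, ← map_mul, ← map_add, ← map_pow, ← map_sum]

section CoordinateModel

variable (K : Type) [Field K] (q n : ℕ)

abbrev NUVert : Type := {v : Fin (n + 1) → K // IsNormalized v ∧ ∑ i, v i ^ (q + 1) ≠ 0}

variable {K q n} in
theorem NUVert.linearIndependent {u v : NUVert K q n} (h : u ≠ v) :
    LinearIndependent K ![u.1, v.1] :=
  linearIndependent_pair_of_mk_ne fun he => h (Subtype.ext (u.2.1.eq_of_mk_eq v.2.1 he))

def NUVert.toPoint (u : NUVert K q n) : {p : PG K n // p ∉ Herm K q n} :=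
  ⟨mk K u.1 u.2.1.ne_zero, (mk_mem_herm_iff _).not.2 u.2.2⟩

theorem NUVert.toPoint_bijective : Bijective (NUVert.toPoint K q n) := by
  refine ⟨fun u v h => Subtype.ext (u.2.1.eq_of_mk_eq v.2.1 (congrArg Subtype.val h)), ?_⟩
  rintro ⟨p, hp⟩
  induction p using Projectivization.ind with
  | h v hv =>
  obtain ⟨w, hw, hwv⟩ := exists_isNormalized_mk_eq hv
  rw [← hwv, mk_mem_herm_iff] at hp
  exact ⟨⟨w, hw, hp⟩, Subtype.ext hwv⟩

variable [Fintype K] [DecidableEq K]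

def NUCoord : SimpleGraph (NUVert K q n) where
  Adj u v := u ≠ v ∧ hermCount q u.1 v.1 = 1
  symm := by
    constructor
    rintro u v ⟨huv, h⟩
    exact ⟨huv.symm, by rwa [← hermCount_comm (NUVert.linearIndependent huv)]⟩
  loopless := ⟨fun _ h => h.1 rfl⟩

instance : DecidableRel (NUCoord K q n).Adj :=
  fun u v => inferInstanceAs (Decidable (u ≠ v ∧ hermCount q u.1 v.1 = 1))

noncomputable def NUCoord.isoNU : NUCoord K q n ≃g NU K q n where
  toEquiv := Equiv.ofBijective _ (NUVert.toPoint_bijective K q n)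
  map_rel_iff' {u v} := by
    rw [Equiv.ofBijective_apply, Equiv.ofBijective_apply, NU_adj_iff,
      (NUVert.toPoint_bijective K q n).injective.ne_iff]
    refine and_congr_right fun huv => ?_
    show _ ↔ hermCount q u.1 v.1 = 1
    rw [NUVert.toPoint, NUVert.toPoint, hermCount_rep_mk]
    exact fun he => huv (Subtype.ext (u.2.1.eq_of_mk_eq v.2.1 he))

variable {K} in
def NUCoord.congr {L : Type} [Field L] [Fintype L] [DecidableEq L] (σ : K ≃+* L) :
    NUCoord K q n ≃g NUCoord L q n where
  toEquiv := (Equiv.piCongrRight fun _ => σ.toEquiv).subtypeEquiv fun v => by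
    show _ ↔ IsNormalized (fun i => σ (v i)) ∧ ∑ i, σ (v i) ^ (q + 1) ≠ 0
    simp [isNormalized_map_iff, ← map_pow, ← map_sum]
  map_rel_iff' {u v} := by
    show _ ∧ hermCount q (fun i => σ (u.1 i)) (fun i => σ (v.1 i)) = 1 ↔ _
    rw [hermCount_map, Ne, EmbeddingLike.apply_eq_iff_eq]
    rfl

end CoordinateModel

theorem IsSRG.of_iso {V W : Type} {G : SimpleGraph V} {H : SimpleGraph W} {v k l m : ℤ}
    (e : G ≃g H) (h : IsSRG G v k l m) : IsSRG H v k l m := by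
  have hcommon (x y : V) :
      Nat.card (H.commonNeighbors (e x) (e y)) = Nat.card (G.commonNeighbors x y) :=
    (Nat.card_congr (e.toEquiv.subtypeEquiv fun z => by
      simp [SimpleGraph.mem_commonNeighbors, e.map_adj_iff])).symm
  obtain ⟨hv, hk, hl, hm⟩ := h
  refine ⟨Nat.card_congr e.toEquiv.symm ▸ hv, fun x => ?_, fun x y hxy => ?_,
    fun x y hxy hn => ?_⟩ <;> obtain ⟨x, rfl⟩ := e.surjective x
  · rw [← hk x, Nat.card_congr (e.mapNeighborSet x)]
  all_goals obtain ⟨y, rfl⟩ := e.surjective y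
  · rw [hcommon, hl x y (e.map_adj_iff.1 hxy)]
  · rw [hcommon, hm x y (e.injective.ne_iff.1 hxy) (e.map_adj_iff.not.1 hn)]

inductive GF4 : Type
  | O | I | A | B
  deriving DecidableEq

namespace GF4

-- `A` is a root of `X ^ 2 + X + 1` over `𝔽₂`, and `B = A + 1 = A ^ 2`.

instance : Fintype GF4 := ⟨{O, I, A, B}, fun x => by cases x <;> simp⟩

instance : Zero GF4 := ⟨O⟩
instance : One GF4 := ⟨I⟩
instance : Add GF4 := ⟨fun x y => match x, y with
  | O, x => x | x, O => x
  | I, I => O | I, A => B | I, B => A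
  | A, I => B | A, A => O | A, B => I
  | B, I => A | B, A => I | B, B => O⟩
instance : Mul GF4 := ⟨fun x y => match x, y with
  | O, _ => O | _, O => O
  | I, x => x | x, I => x
  | A, A => B | A, B => I
  | B, A => I | B, B => A⟩
instance : Neg GF4 := ⟨id⟩
instance : Inv GF4 := ⟨fun x => match x with | O => O | I => I | A => B | B => A⟩

instance : CommRing GF4 where
  add_assoc := by decide
  zero_add := by decide
  add_zero := by decide
  add_comm := by decide
  neg_add_cancel := by decide
  mul_assoc := by decide
  one_mul := by decide
  mul_one := by decide
  left_distrib := by decide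
  right_distrib := by decide
  mul_comm := by decide
  zero_mul := by decide
  mul_zero := by decide
  nsmul := nsmulRec
  zsmul := zsmulRec

instance : Field GF4 where
  exists_pair_ne := ⟨O, I, by decide⟩
  mul_inv_cancel := by decide
  inv_zero := by decide
  nnqsmul := _
  qsmul := _

theorem isSRG_NUCoord : IsSRG (NUCoord GF4 2 2) 12 9 6 9 := by
  simp only [IsSRG, Nat.card_eq_fintype_card]
  decide

end GF4

/-- For `q = 2`, the graph `NU(3,4)` is strongly regular with parameters
`(12, 9, 6, 9)`. -/
theorem NU34_isSRG (hF : Fintype.card F = 4) :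
    IsSRG (NU F 2 2) 12 9 6 9 := by
  classical
  let σ : GF4 ≃+* F := FiniteField.ringEquivOfCardEq (hF ▸ rfl)
  exact GF4.isSRG_NUCoord.of_iso ((NUCoord.congr 2 2 σ).trans (NUCoord.isoNU F 2 2))
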